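/- arXiv:1311.7348 — 6 statements merged into one kernel-verified Lean document; each statement's English description precedes it below -/
import Mathlib

section
/- Let f* be a strictly positive feasible vector of path flows that maximizes the aggregate utility U(f) = ∑_{j=1}^ρ log(f_j) over all strictly positive feasible vectors of path flows. Then f* is proportionally fair, i.e. for every feasible vector of path flows g one has ∑_{j=1}^ρ (g_j − f*_j)/f*_j ≤ 0. -/
/-!
The derivative of `U` at the strictly positive `f` is `v ↦ ∑ j, v j / f j`. The open segment from
`f` to a feasible `g` consists of strictly positive feasible flows, so `g - f` is in the positive
tangent cone of the set on which `f` maximizes `U`, and Fermat's condition for a maximum on a set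
makes the derivative in that direction nonpositive.
-/

open Finset

/-- A vector of path flows is feasible if it is nonnegative and respects the
link capacities. -/
def Feasible {η ρ : ℕ} (B : Fin η → Fin ρ → ℝ) (c : Fin η → ℝ)
    (f : Fin ρ → ℝ) : Prop :=
  (∀ j, 0 ≤ f j) ∧ ∀ i, ∑ j, B i j * f j ≤ c i

theorem hasFDerivAt_sum_log {ι : Type*} [Fintype ι] {x : ι → ℝ} (hx : ∀ i, x i ≠ 0) :
    HasFDerivAt (fun y : ι → ℝ => ∑ i, Real.log (y i))
      (∑ i, (x i)⁻¹ • (ContinuousLinearMap.proj i : (ι → ℝ) →L[ℝ] ℝ)) x :=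
  HasFDerivAt.fun_sum fun i _ => (hasFDerivAt_apply i x).log (hx i)

theorem sum_sub_div_nonpos_of_isMaxOn_sum_log {ι : Type*} [Fintype ι] {s : Set (ι → ℝ)}
    {x y : ι → ℝ} (hx : ∀ i, 0 < x i) (hmax : IsMaxOn (fun z : ι → ℝ => ∑ i, Real.log (z i)) s x)
    (hxy : openSegment ℝ x y ⊆ s) :
    ∑ i, (y i - x i) / x i ≤ 0 := by
  have h := hmax.localize.hasFDerivWithinAt_nonpos
    (hasFDerivAt_sum_log fun i => (hx i).ne').hasFDerivWithinAt
    (sub_mem_posTangentConeAt_of_openSegment_subset hxy)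
  simpa [div_eq_inv_mul] using h

theorem openSegment_subset_setOf_pos {ι : Type*} {x y : ι → ℝ} (hx : ∀ i, 0 < x i)
    (hy : ∀ i, 0 ≤ y i) : openSegment ℝ x y ⊆ {z | ∀ i, 0 < z i} := by
  rintro _ ⟨a, b, ha, hb, -, rfl⟩ i
  simp only [Pi.add_apply, Pi.smul_apply, smul_eq_mul]
  have := hx i; have := hy i
  positivity

theorem convex_setOf_feasible {η ρ : ℕ} (B : Fin η → Fin ρ → ℝ) (c : Fin η → ℝ) :
    Convex ℝ {f | Feasible B c f} := by
  rintro f ⟨hf, hfc⟩ g ⟨hg, hgc⟩ a b ha hb hab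
  refine ⟨fun j => ?_, fun i => ?_⟩
  · have := hf j; have := hg j
    simp only [Pi.add_apply, Pi.smul_apply, smul_eq_mul]
    positivity
  · calc ∑ j, B i j * (a • f + b • g) j = a * ∑ j, B i j * f j + b * ∑ j, B i j * g j := by
          simp only [Pi.add_apply, Pi.smul_apply, smul_eq_mul, mul_sum, ← sum_add_distrib]
          exact sum_congr rfl fun j _ => by ring
      _ ≤ a * c i + b * c i := by gcongr; exacts [hfc i, hgc i]
      _ = c i := by rw [← add_mul, hab, one_mul]

theorem maximizer_of_log_utility_is_proportionally_fair_general
    (η ρ : ℕ)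
    (B : Fin η → Fin ρ → ℝ)
    (c : Fin η → ℝ)
    (f : Fin ρ → ℝ) (hfpos : ∀ j, 0 < f j) (hffeas : Feasible B c f)
    (hmax : ∀ g : Fin ρ → ℝ, (∀ j, 0 < g j) → Feasible B c g →
      ∑ j, Real.log (g j) ≤ ∑ j, Real.log (f j)) :
    ∀ g : Fin ρ → ℝ, Feasible B c g → ∑ j, (g j - f j) / f j ≤ 0 := by
  intro g hg
  exact sum_sub_div_nonpos_of_isMaxOn_sum_log (s := {h | (∀ j, 0 < h j) ∧ Feasible B c h})
    hfpos (fun h hh => hmax h hh.1 hh.2) fun z hz =>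
      ⟨openSegment_subset_setOf_pos hfpos hg.1 hz,
        (convex_setOf_feasible B c).openSegment_subset hffeas hg hz⟩

/-- A strictly positive feasible maximizer of the aggregate utility
`U(f) = ∑ j, log (f j)` over strictly positive feasible vectors of path flows
is proportionally fair. -/
theorem maximizer_of_log_utility_is_proportionally_fair
    (η ρ : ℕ) (hη : 0 < η) (hρ : 0 < ρ)
    (B : Fin η → Fin ρ → ℝ) (hB : ∀ i j, B i j = 0 ∨ B i j = 1)
    (c : Fin η → ℝ) (hc : ∀ i, 0 < c i)
    (f : Fin ρ → ℝ) (hfpos : ∀ j, 0 < f j) (hffeas : Feasible B c f)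
    (hmax : ∀ g : Fin ρ → ℝ, (∀ j, 0 < g j) → Feasible B c g →
      ∑ j, Real.log (g j) ≤ ∑ j, Real.log (f j)) :
    ∀ g : Fin ρ → ℝ, Feasible B c g → ∑ j, (g j - f j) / f j ≤ 0 :=
  maximizer_of_log_utility_is_proportionally_fair_general η ρ B c f hfpos hffeas hmax
end

section
/- Let f* be a proportionally fair vector of path flows. Then f* maximizes the aggregate utility U(f) = ∑_{j=1}^ρ log(f_j) over all strictly positive feasible vectors of path flows, i.e. for every feasible g with g_j > 0 for all j, ∑_{j=1}^ρ log(g_j) ≤ ∑_{j=1}^ρ log(f*_j). -/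
open Finset

/-!
Proportional fairness says that the directional derivative of the concave utility
`∑ j, log (f j)` at `f` towards any feasible `g` is nonpositive. The tangent-line bound
`log y - log x ≤ (y - x) / x` turns this first-order condition into global optimality.
-/

namespace Real

theorem log_sub_log_le_sub_div {x y : ℝ} (hx : 0 < x) (hy : 0 < y) :
    log y - log x ≤ (y - x) / x :=
  calc log y - log x = log (y / x) := (log_div hy.ne' hx.ne').symm
    _ ≤ y / x - 1 := log_le_sub_one_of_pos (div_pos hy hx)
    _ = (y - x) / x := by rw [sub_div, div_self hx.ne']

theorem sum_log_le_sum_log_of_sum_sub_div_nonpos {ι : Type*} {s : Finset ι} {f g : ι → ℝ}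
    (hf : ∀ i ∈ s, 0 < f i) (hg : ∀ i ∈ s, 0 < g i)
    (h : ∑ i ∈ s, (g i - f i) / f i ≤ 0) :
    ∑ i ∈ s, log (g i) ≤ ∑ i ∈ s, log (f i) := by
  have hsum : ∑ i ∈ s, (log (g i) - log (f i)) ≤ ∑ i ∈ s, (g i - f i) / f i :=
    sum_le_sum fun i hi => log_sub_log_le_sub_div (hf i hi) (hg i hi)
  rw [sum_sub_distrib] at hsum
  linarith

end Real

theorem proportionally_fair_maximizes_log_utility_general
    (η ρ : ℕ) (B : Fin η → Fin ρ → ℝ) (c : Fin η → ℝ)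
    (f : Fin ρ → ℝ) (hfpos : ∀ j, 0 < f j)
    (hpf : ∀ g : Fin ρ → ℝ, Feasible B c g → ∑ j, (g j - f j) / f j ≤ 0) :
    ∀ g : Fin ρ → ℝ, (∀ j, 0 < g j) → Feasible B c g →
      ∑ j, Real.log (g j) ≤ ∑ j, Real.log (f j) :=
  fun g hgpos hgfeas =>
    Real.sum_log_le_sum_log_of_sum_sub_div_nonpos (fun j _ => hfpos j) (fun j _ => hgpos j)
      (hpf g hgfeas)

/-- A proportionally fair vector of path flows maximizes the aggregate utility
`U(f) = ∑ j, log (f j)` over all strictly positive feasible vectors of path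
flows. -/
theorem proportionally_fair_maximizes_log_utility
    (η ρ : ℕ) (hη : 0 < η) (hρ : 0 < ρ)
    (B : Fin η → Fin ρ → ℝ) (hB : ∀ i j, B i j = 0 ∨ B i j = 1)
    (c : Fin η → ℝ) (hc : ∀ i, 0 < c i)
    (f : Fin ρ → ℝ) (hfpos : ∀ j, 0 < f j) (hffeas : Feasible B c f)
    (hpf : ∀ g : Fin ρ → ℝ, Feasible B c g → ∑ j, (g j - f j) / f j ≤ 0) :
    ∀ g : Fin ρ → ℝ, (∀ j, 0 < g j) → Feasible B c g →
      ∑ j, Real.log (g j) ≤ ∑ j, Real.log (f j) :=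
  proportionally_fair_maximizes_log_utility_general η ρ B c f hfpos hpf
end

section
/- If a vector of path flows f is proportionally fair, then every path passes through a bottleneck: for each path index j there exists a link index i with B i j = 1 and ∑_{k=1}^ρ B i k * f_k = c_i. -/
open Finset

/-! If some path `j` avoided every bottleneck, each link on it would have slack, so the flow on
`j` alone could be raised by some `ε > 0` while staying feasible; this changes the
proportional-fairness sum by `ε / f j > 0`. -/

open Filter Topology

section

variable {κ : Type*} [Fintype κ] [DecidableEq κ]

theorem sum_mul_add_single (b f : κ → ℝ) (j : κ) (ε : ℝ) :
    ∑ k, b k * (f + Pi.single j ε : κ → ℝ) k = ∑ k, b k * f k + b j * ε := by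
  simp only [Pi.add_apply, mul_add, sum_add_distrib, Pi.single_apply, mul_ite, mul_zero,
    sum_ite_eq', mem_univ, if_true]

theorem sum_sub_div_add_single (f : κ → ℝ) (j : κ) (ε : ℝ) :
    ∑ k, ((f + Pi.single j ε : κ → ℝ) k - f k) / f k = ε / f j := by
  simp only [Pi.add_apply, add_sub_cancel_left, Pi.single_apply, ite_div, zero_div,
    sum_ite_eq', mem_univ, if_true]

theorem eventually_sum_mul_add_single_le {b f : κ → ℝ} {c : ℝ} {j : κ}
    (hle : ∑ k, b k * f k ≤ c) (hlt : 0 < b j → ∑ k, b k * f k < c) :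
    ∀ᶠ ε in 𝓝[>] (0 : ℝ), ∑ k, b k * (f + Pi.single j ε : κ → ℝ) k ≤ c := by
  simp only [sum_mul_add_single]
  rcases lt_or_ge 0 (b j) with hpos | hnonpos
  · have hcont : Tendsto (fun ε => ∑ k, b k * f k + b j * ε) (𝓝 0) (𝓝 (∑ k, b k * f k)) :=
      (continuous_const.add (continuous_const_mul (b j))).tendsto' 0 _ (by simp)
    exact (hcont.mono_left nhdsWithin_le_nhds).eventually (eventually_le_nhds (hlt hpos))
  · filter_upwards [eventually_mem_nhdsWithin] with ε hε
    linarith [mul_nonpos_of_nonpos_of_nonneg hnonpos (le_of_lt (Set.mem_Ioi.1 hε))]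

end

theorem Feasible.exists_pos_add_single {η ρ : ℕ} {B : Fin η → Fin ρ → ℝ} {c : Fin η → ℝ}
    {f : Fin ρ → ℝ} (hf : Feasible B c f) (j : Fin ρ)
    (hslack : ∀ i, 0 < B i j → ∑ k, B i k * f k < c i) :
    ∃ ε > 0, Feasible B c (f + Pi.single j ε) := by
  have hlinks : ∀ᶠ ε in 𝓝[>] (0 : ℝ),
      ∀ i, ∑ k, B i k * (f + Pi.single j ε : Fin ρ → ℝ) k ≤ c i :=
    eventually_all.2 fun i => eventually_sum_mul_add_single_le (hf.2 i) (hslack i)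
  obtain ⟨ε, hε, hε_links⟩ := (eventually_mem_nhdsWithin.and hlinks).exists
  have hε_nonneg : (0 : Fin ρ → ℝ) ≤ Pi.single j ε := Pi.single_nonneg.2 (le_of_lt hε)
  exact ⟨ε, hε, fun k => add_nonneg (hf.1 k) (hε_nonneg k), hε_links⟩

theorem proportionally_fair_every_path_through_bottleneck_general
    (η ρ : ℕ)
    (B : Fin η → Fin ρ → ℝ) (hB : ∀ i j, B i j = 0 ∨ B i j = 1)
    (c : Fin η → ℝ)
    (f : Fin ρ → ℝ) (hfpos : ∀ j, 0 < f j) (hffeas : Feasible B c f)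
    (hpf : ∀ g : Fin ρ → ℝ, Feasible B c g → ∑ j, (g j - f j) / f j ≤ 0) :
    ∀ j, ∃ i, B i j = 1 ∧ ∑ k, B i k * f k = c i := by
  intro j
  by_contra! hcon
  have hslack : ∀ i, 0 < B i j → ∑ k, B i k * f k < c i := fun i hpos =>
    (hffeas.2 i).lt_of_ne (hcon i ((hB i j).resolve_left hpos.ne'))
  obtain ⟨ε, hε, hfeas⟩ := hffeas.exists_pos_add_single j hslack
  have hfair := hpf _ hfeas
  rw [sum_sub_div_add_single] at hfair
  exact hfair.not_gt (div_pos hε (hfpos j))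

/-- If a vector of path flows is proportionally fair, then every path passes
through a bottleneck, i.e. a link whose total flow equals its capacity. -/
theorem proportionally_fair_every_path_through_bottleneck
    (η ρ : ℕ) (hη : 0 < η) (hρ : 0 < ρ)
    (B : Fin η → Fin ρ → ℝ) (hB : ∀ i j, B i j = 0 ∨ B i j = 1)
    (c : Fin η → ℝ) (hc : ∀ i, 0 < c i)
    (f : Fin ρ → ℝ) (hfpos : ∀ j, 0 < f j) (hffeas : Feasible B c f)
    (hpf : ∀ g : Fin ρ → ℝ, Feasible B c g → ∑ j, (g j - f j) / f j ≤ 0) :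
    ∀ j, ∃ i, B i j = 1 ∧ ∑ k, B i k * f k = c i :=
  proportionally_fair_every_path_through_bottleneck_general η ρ B hB c f hfpos hffeas hpf
end

section
/- Suppose there exists a strictly feasible (Slater) point, i.e. f with f_j > 0 for all j and ∑_j B i j * f_j < c_i for all i, and suppose every path contains at least one link. Then strong duality holds: the supremum of ∑_{j=1}^ρ log(f_j) over all strictly positive feasible f equals the infimum, over all μ : Fin η → ℝ with μ i ≥ 0 and ∑_i B i j * μ_i > 0 for all j, of −∑_{j=1}^ρ log(∑_{i=1}^η B i j * μ_i) + ∑_{i=1}^η μ_i c_i − ρ. -/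
open Finset

/-!
Weak duality is the inequality `log x ≤ x - 1` applied termwise to `x = f j * (Bᵀ μ) j`.
For the converse, follow the central path of the logarithmic barrier method: for `t > 0` the
barrier `∑ j, log (f j) + t * ∑ i, log (c i - (B f) i)` tends to `-∞` at the boundary of the
bounded strictly feasible set, so it attains its maximum there. Its stationarity equations say
that the prices `μ i = t / (c i - (B f) i)` satisfy `(Bᵀ μ) j = 1 / f j`, and this primal-dual
pair has duality gap exactly `t * η`, which can be made arbitrarily small.
-/

open Real

theorem sum_le_add_card_mul {α : Type*} [Fintype α] {a : α → ℝ} {M : ℝ} (hM : ∀ k, a k ≤ M)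
    (hM₀ : 0 ≤ M) (k : α) : ∑ l, a l ≤ a k + Fintype.card α * M := by
  classical
  rw [← add_sum_erase _ _ (mem_univ k)]
  gcongr
  calc ∑ l ∈ univ.erase k, a l ≤ #(univ.erase k) • M := sum_le_card_nsmul _ _ _ fun l _ => hM l
    _ ≤ Fintype.card α * M := by
      rw [nsmul_eq_mul, ← card_univ]
      gcongr
      exact erase_subset k univ

theorem exists_isMaxOn_of_superlevel_subset {E α : Type*} [TopologicalSpace E] [LinearOrder α]
    [TopologicalSpace α] [ClosedIciTopology α] {g : E → α} {Ω K : Set E} {x₀ : E}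
    (hK : IsCompact K) (hg : ContinuousOn g K) (hx₀ : x₀ ∈ Ω)
    (hsub : ∀ x ∈ Ω, g x₀ ≤ g x → x ∈ K) : ∃ x ∈ K, IsMaxOn g Ω x := by
  have hx₀K := hsub x₀ hx₀ le_rfl
  obtain ⟨x, hxK, hmax⟩ := hK.exists_isMaxOn ⟨x₀, hx₀K⟩ hg
  refine ⟨x, hxK, fun y hy => ?_⟩
  by_cases hy₀ : g x₀ ≤ g y
  · exact hmax (hsub y hy hy₀)
  · exact (not_le.mp hy₀).le.trans (hmax hx₀K)

theorem csSup_eq_csInf_of_forall_exists_le_add {S D : Set ℝ} (hle : ∀ a ∈ S, ∀ b ∈ D, a ≤ b)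
    (happrox : ∀ ε > 0, ∃ a ∈ S, ∃ b ∈ D, b ≤ a + ε) : sSup S = sInf D := by
  obtain ⟨a₀, ha₀, b₀, hb₀, -⟩ := happrox 1 one_pos
  refine le_antisymm (csSup_le ⟨a₀, ha₀⟩ fun a ha => le_csInf ⟨b₀, hb₀⟩ (hle a ha))
    (le_of_forall_pos_le_add fun ε hε => ?_)
  obtain ⟨a, ha, b, hb, hba⟩ := happrox ε hε
  calc sInf D ≤ b := csInf_le ⟨a₀, fun b hb => hle a₀ ha₀ b hb⟩ hb
    _ ≤ a + ε := hba
    _ ≤ sSup S + ε := by grw [le_csSup ⟨b₀, fun a ha => hle a ha b₀ hb₀⟩ ha]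

section PathFlows

variable {ι κ : Type*} [Fintype κ] {B : ι → κ → ℝ} {c : ι → ℝ} {t : ℝ}

noncomputable def slack (B : ι → κ → ℝ) (c : ι → ℝ) (f : κ → ℝ) (i : ι) : ℝ :=
  c i - ∑ j, B i j * f j

theorem continuous_slack (B : ι → κ → ℝ) (c : ι → ℝ) (i : ι) :
    Continuous fun f => slack B c f i := by
  unfold slack
  fun_prop

theorem isCompact_Icc_inter_slack_ge (B : ι → κ → ℝ) (c : ι → ℝ) (δ C : ℝ) :
    IsCompact (Set.Icc (fun _ => δ) (fun _ => C) ∩ {f | ∀ i, δ ≤ slack B c f i}) := by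
  refine isCompact_Icc.inter_right ?_
  simp only [Set.ofPred_forall]
  exact isClosed_iInter fun i => isClosed_le continuous_const (continuous_slack B c i)

def strictFeasibleSet (B : ι → κ → ℝ) (c : ι → ℝ) : Set (κ → ℝ) :=
  {f | (∀ j, 0 < f j) ∧ ∀ i, 0 < slack B c f i}

variable [Fintype ι]

theorem sum_mul_sum_comm_transpose (B : ι → κ → ℝ) (f : κ → ℝ) (μ : ι → ℝ) :
    ∑ j, f j * ∑ i, B i j * μ i = ∑ i, μ i * ∑ j, B i j * f j := by
  simp only [mul_sum]
  rw [sum_comm]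
  exact sum_congr rfl fun _ _ => sum_congr rfl fun _ _ => by ring

theorem sum_log_le_dual_objective {f : κ → ℝ} {μ : ι → ℝ} (hf : ∀ j, 0 < f j)
    (hcap : ∀ i, ∑ j, B i j * f j ≤ c i) (hμ : ∀ i, 0 ≤ μ i)
    (hq : ∀ j, 0 < ∑ i, B i j * μ i) :
    ∑ j, log (f j) ≤
      -(∑ j, log (∑ i, B i j * μ i)) + ∑ i, μ i * c i - Fintype.card κ := by
  have hlog : ∑ j, (log (f j) + log (∑ i, B i j * μ i)) ≤
      ∑ j, (f j * ∑ i, B i j * μ i - 1) := sum_le_sum fun j _ => by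
    rw [← log_mul (hf j).ne' (hq j).ne']
    exact log_le_sub_one_of_pos (mul_pos (hf j) (hq j))
  have hcost : ∑ i, μ i * ∑ j, B i j * f j ≤ ∑ i, μ i * c i :=
    sum_le_sum fun i _ => mul_le_mul_of_nonneg_left (hcap i) (hμ i)
  rw [sum_add_distrib, sum_sub_distrib, sum_mul_sum_comm_transpose] at hlog
  simp only [sum_const, card_univ, nsmul_eq_mul, mul_one] at hlog
  linarith

theorem dual_objective_eq_of_central_path {f : κ → ℝ} {μ : ι → ℝ}
    (hf : ∀ j, f j ≠ 0) (hq : ∀ j, ∑ i, B i j * μ i = (f j)⁻¹)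
    (hμ : ∀ i, μ i * slack B c f i = t) :
    -(∑ j, log (∑ i, B i j * μ i)) + ∑ i, μ i * c i - Fintype.card κ =
      ∑ j, log (f j) + t * Fintype.card ι := by
  have hlog : ∑ j, log (∑ i, B i j * μ i) = -∑ j, log (f j) := by
    simp only [hq, log_inv, sum_neg_distrib]
  have hcost : ∑ i, μ i * c i = ∑ i, μ i * ∑ j, B i j * f j + t * Fintype.card ι := by
    calc ∑ i, μ i * c i = ∑ i, (μ i * slack B c f i + μ i * ∑ j, B i j * f j) :=
          sum_congr rfl fun i _ => by rw [slack]; ring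
      _ = _ := by simp only [hμ, sum_add_distrib, sum_const, card_univ, nsmul_eq_mul]; ring
  have hload : ∑ i, μ i * ∑ j, B i j * f j = Fintype.card κ := by
    rw [← sum_mul_sum_comm_transpose]
    simp [hq, mul_inv_cancel₀ (hf _)]
  linarith

noncomputable def barrier (B : ι → κ → ℝ) (c : ι → ℝ) (t : ℝ) (f : κ → ℝ) : ℝ :=
  ∑ j, log (f j) + t * ∑ i, log (slack B c f i)

theorem isOpen_strictFeasibleSet (B : ι → κ → ℝ) (c : ι → ℝ) :
    IsOpen (strictFeasibleSet B c) := by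
  simp only [strictFeasibleSet, Set.ofPred_and, Set.ofPred_forall]
  exact (isOpen_iInter_of_finite fun j => isOpen_lt continuous_const (continuous_apply j)).inter
    (isOpen_iInter_of_finite fun i => isOpen_lt continuous_const (continuous_slack B c i))

theorem continuousOn_barrier (B : ι → κ → ℝ) (c : ι → ℝ) (t : ℝ) :
    ContinuousOn (barrier B c t) (strictFeasibleSet B c) :=
  (continuousOn_finsetSum _ fun j _ =>
      (continuous_apply j).continuousOn.log fun _ hf => (hf.1 j).ne').add
    (continuousOn_const.mul (continuousOn_finsetSum _ fun i _ =>
      (continuous_slack B c i).continuousOn.log fun _ hf => (hf.2 i).ne'))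

theorem exists_bound_on_strictFeasibleSet (hB : ∀ i j, 0 ≤ B i j)
    (hlink : ∀ j, ∃ i, 0 < B i j) :
    ∃ C, 1 ≤ C ∧ ∀ f ∈ strictFeasibleSet B c, (∀ j, f j ≤ C) ∧ ∀ i, slack B c f i ≤ C := by
  choose l hl using hlink
  have hload : ∀ f ∈ strictFeasibleSet B c, ∀ i j, B i j * f j ≤ ∑ j', B i j' * f j' :=
    fun f hf i j => single_le_sum (fun j' _ => mul_nonneg (hB i j') (hf.1 j').le) (mem_univ j)
  have hbound_nonneg : ∀ j, 0 ≤ |c (l j)| / B (l j) j :=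
    fun j => div_nonneg (abs_nonneg _) (hl j).le
  have hc : 0 ≤ ∑ i, |c i| := sum_nonneg fun i _ => abs_nonneg _
  have hcl : 0 ≤ ∑ j, |c (l j)| / B (l j) j := sum_nonneg fun j _ => hbound_nonneg j
  refine ⟨1 + ∑ i, |c i| + ∑ j, |c (l j)| / B (l j) j, by linarith,
    fun f hf => ⟨fun j => ?_, fun i => ?_⟩⟩
  · have hj : f j ≤ |c (l j)| / B (l j) j := by
      rw [le_div_iff₀ (hl j)]
      have := hf.2 (l j)
      rw [slack] at this
      linarith [hload f hf (l j) j, le_abs_self (c (l j))]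
    have := single_le_sum (f := fun j => |c (l j)| / B (l j) j) (fun j _ => hbound_nonneg j)
      (mem_univ j)
    linarith
  · have := single_le_sum (f := fun i => |c i|) (fun i _ => abs_nonneg _) (mem_univ i)
    have : 0 ≤ ∑ j, B i j * f j := sum_nonneg fun j _ => mul_nonneg (hB i j) (hf.1 j).le
    rw [slack]
    linarith [le_abs_self (c i)]

theorem barrier_le_log_add (ht : 0 ≤ t) {C : ℝ} (hC : 1 ≤ C) {f : κ → ℝ}
    (hf : f ∈ strictFeasibleSet B c) (hfC : ∀ j, f j ≤ C) (hsC : ∀ i, slack B c f i ≤ C)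
    (j : κ) : barrier B c t f ≤ log (f j) + (Fintype.card κ + t * Fintype.card ι) * log C := by
  have hflow := sum_le_add_card_mul (fun j => log_le_log (hf.1 j) (hfC j)) (log_nonneg hC) j
  have hslack : ∑ i, log (slack B c f i) ≤ Fintype.card ι * log C := by
    simpa using sum_le_card_nsmul univ _ _ fun i _ => log_le_log (hf.2 i) (hsC i)
  have := mul_le_mul_of_nonneg_left hslack ht
  rw [barrier]
  linarith

theorem barrier_le_mul_log_slack_add (ht : 0 ≤ t) {C : ℝ} (hC : 1 ≤ C) {f : κ → ℝ}
    (hf : f ∈ strictFeasibleSet B c) (hfC : ∀ j, f j ≤ C) (hsC : ∀ i, slack B c f i ≤ C)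
    (i : ι) :
    barrier B c t f ≤ t * log (slack B c f i) + (Fintype.card κ + t * Fintype.card ι) * log C := by
  have hflow : ∑ j, log (f j) ≤ Fintype.card κ * log C := by
    simpa using sum_le_card_nsmul univ _ _ fun j _ => log_le_log (hf.1 j) (hfC j)
  have hslack := sum_le_add_card_mul (fun i => log_le_log (hf.2 i) (hsC i)) (log_nonneg hC) i
  have := mul_le_mul_of_nonneg_left hslack ht
  rw [barrier]
  linarith

theorem hasDerivAt_barrier_update [DecidableEq κ] {f : κ → ℝ} (hf : f ∈ strictFeasibleSet B c)
    (j : κ) :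
    HasDerivAt (fun y => barrier B c t (Function.update f j y))
      ((f j)⁻¹ - ∑ i, B i j * (t / slack B c f i)) (f j) := by
  have hcoord : ∀ j', HasDerivAt (fun y => Function.update f j y j')
      ((Pi.single j 1 : κ → ℝ) j') (f j) :=
    hasDerivAt_pi.mp (hasDerivAt_update f j (f j))
  have hflow : ∀ j', HasDerivAt (fun y => log (Function.update f j y j'))
      ((Pi.single j 1 : κ → ℝ) j' / f j') (f j) := fun j' => by
    simpa using (hcoord j').log (by simpa using (hf.1 j').ne')
  have hslack : ∀ i, HasDerivAt (fun y => log (slack B c (Function.update f j y) i))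
      (-B i j / slack B c f i) (f j) := fun i => by
    have hlin : HasDerivAt (fun y => slack B c (Function.update f j y) i) (-B i j) (f j) := by
      simpa [slack, Pi.single_apply] using
        (HasDerivAt.fun_sum (u := univ) fun j' _ => (hcoord j').const_mul (B i j')).const_sub (c i)
    simpa using hlin.log (by simpa using (hf.2 i).ne')
  refine ((HasDerivAt.fun_sum fun j' _ => hflow j').add
    ((HasDerivAt.fun_sum fun i _ => hslack i).const_mul t)).congr_deriv ?_
  simp only [Pi.single_apply, ite_div, one_div, zero_div, sum_ite_eq', mem_univ,
    if_true, mul_sum, ← sum_neg_distrib, sub_eq_add_neg]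
  congr 1
  exact sum_congr rfl fun i _ => by ring

theorem barrier_stationary_of_isLocalMax {f : κ → ℝ} (hf : f ∈ strictFeasibleSet B c)
    (hmax : IsLocalMax (barrier B c t) f) (j : κ) :
    ∑ i, B i j * (t / slack B c f i) = (f j)⁻¹ := by
  classical
  have hslice : IsLocalMax (barrier B c t ∘ Function.update f j) (f j) :=
    IsLocalMax.comp_continuous (by rwa [Function.update_eq_self]) (by fun_prop)
  exact (sub_eq_zero.mp (hslice.hasDerivAt_eq_zero (hasDerivAt_barrier_update hf j))).symm

theorem exists_barrier_stationary (hB : ∀ i j, 0 ≤ B i j) (hlink : ∀ j, ∃ i, 0 < B i j)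
    (hslater : (strictFeasibleSet B c).Nonempty) (ht : 0 < t) :
    ∃ f ∈ strictFeasibleSet B c, ∀ j, ∑ i, B i j * (t / slack B c f i) = (f j)⁻¹ := by
  obtain ⟨C, hC, hbound⟩ := exists_bound_on_strictFeasibleSet (c := c) hB hlink
  obtain ⟨f₀, hf₀⟩ := hslater
  set L := barrier B c t f₀ - (Fintype.card κ + t * Fintype.card ι) * log C
  -- On the superlevel set of `f₀`, all barrier terms but one are at most `log C`; this bounds
  -- the remaining term below, so every flow and every slack is at least `δ`.
  set δ := min (exp L) (exp (L / t))
  set K := Set.Icc (fun _ => δ) (fun _ => C) ∩ {f | ∀ i, δ ≤ slack B c f i}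
  have hδ : 0 < δ := lt_min (exp_pos _) (exp_pos _)
  have hKΩ : K ⊆ strictFeasibleSet B c :=
    fun f hf => ⟨fun j => hδ.trans_le (hf.1.1 j), fun i => hδ.trans_le (hf.2 i)⟩
  have hsub : ∀ f ∈ strictFeasibleSet B c, barrier B c t f₀ ≤ barrier B c t f → f ∈ K := by
    intro f hf hle
    obtain ⟨hfC, hsC⟩ := hbound f hf
    refine ⟨⟨fun j => ?_, hfC⟩, fun i => ?_⟩
    · have := barrier_le_log_add ht.le hC hf hfC hsC j
      calc δ ≤ exp L := min_le_left _ _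
        _ ≤ exp (log (f j)) := exp_le_exp.mpr (by linarith)
        _ = f j := exp_log (hf.1 j)
    · have := barrier_le_mul_log_slack_add ht.le hC hf hfC hsC i
      calc δ ≤ exp (L / t) := min_le_right _ _
        _ ≤ exp (log (slack B c f i)) := exp_le_exp.mpr (by rw [div_le_iff₀ ht]; linarith)
        _ = slack B c f i := exp_log (hf.2 i)
  obtain ⟨f, hfK, hmax⟩ := exists_isMaxOn_of_superlevel_subset
    (isCompact_Icc_inter_slack_ge B c δ C) ((continuousOn_barrier B c t).mono hKΩ) hf₀ hsub
  exact ⟨f, hKΩ hfK, barrier_stationary_of_isLocalMax (hKΩ hfK)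
    (hmax.isLocalMax ((isOpen_strictFeasibleSet B c).mem_nhds (hKΩ hfK)))⟩

end PathFlows

theorem strong_duality_proportional_fairness_general
    (η ρ : ℕ)
    (B : Fin η → Fin ρ → ℝ) (hB : ∀ i j, B i j = 0 ∨ B i j = 1)
    (c : Fin η → ℝ)
    (hslater : ∃ f : Fin ρ → ℝ, (∀ j, 0 < f j) ∧ ∀ i, ∑ j, B i j * f j < c i)
    (hlink : ∀ j, ∃ i, B i j = 1) :
    sSup {v : ℝ | ∃ f : Fin ρ → ℝ, (∀ j, 0 < f j) ∧ Feasible B c f ∧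
        v = ∑ j, Real.log (f j)} =
      sInf {v : ℝ | ∃ μ : Fin η → ℝ, (∀ i, 0 ≤ μ i) ∧
        (∀ j, 0 < ∑ i, B i j * μ i) ∧
        v = -(∑ j, Real.log (∑ i, B i j * μ i)) + ∑ i, μ i * c i - (ρ : ℝ)} := by
  have hB₀ : ∀ i j, 0 ≤ B i j := fun i j => by rcases hB i j with h | h <;> simp [h]
  have hlink₀ : ∀ j, ∃ i, 0 < B i j := fun j => (hlink j).imp fun i hi => by simp [hi]
  have hslater₀ : (strictFeasibleSet B c).Nonempty :=
    hslater.imp fun f hf => ⟨hf.1, fun i => sub_pos.mpr (hf.2 i)⟩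
  apply csSup_eq_csInf_of_forall_exists_le_add
  · rintro _ ⟨f, hf, ⟨-, hcap⟩, rfl⟩ _ ⟨μ, hμ, hq, rfl⟩
    simpa using sum_log_le_dual_objective hf hcap hμ hq
  · intro ε hε
    have ht : 0 < ε / (η + 1) := by positivity
    obtain ⟨f, hf, hstat⟩ := exists_barrier_stationary hB₀ hlink₀ hslater₀ ht
    refine ⟨_, ⟨f, hf.1, ⟨fun j => (hf.1 j).le, fun i => (sub_pos.mp (hf.2 i)).le⟩, rfl⟩,
      _, ⟨fun i => ε / (η + 1) / slack B c f i, fun i => (div_pos ht (hf.2 i)).le,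
        fun j => by rw [hstat]; exact inv_pos.mpr (hf.1 j), rfl⟩, ?_⟩
    have hcentral := dual_objective_eq_of_central_path (fun j => (hf.1 j).ne') hstat
      (fun i => div_mul_cancel₀ _ (hf.2 i).ne')
    simp only [Fintype.card_fin] at hcentral
    rw [hcentral, div_mul_eq_mul_div]
    gcongr
    rw [div_le_iff₀ (by positivity)]
    linarith

/-- Strong duality: under a Slater condition, the supremum of the primal
log-utility over strictly positive feasible flows equals the infimum of the
dual objective over nonnegative link prices whose path aggregates are
positive. -/
theorem strong_duality_proportional_fairness
    (η ρ : ℕ) (hη : 0 < η) (hρ : 0 < ρ)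
    (B : Fin η → Fin ρ → ℝ) (hB : ∀ i j, B i j = 0 ∨ B i j = 1)
    (c : Fin η → ℝ) (hc : ∀ i, 0 < c i)
    (hslater : ∃ f : Fin ρ → ℝ, (∀ j, 0 < f j) ∧ ∀ i, ∑ j, B i j * f j < c i)
    (hlink : ∀ j, ∃ i, B i j = 1) :
    sSup {v : ℝ | ∃ f : Fin ρ → ℝ, (∀ j, 0 < f j) ∧ Feasible B c f ∧
        v = ∑ j, Real.log (f j)} =
      sInf {v : ℝ | ∃ μ : Fin η → ℝ, (∀ i, 0 ≤ μ i) ∧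
        (∀ j, 0 < ∑ i, B i j * μ i) ∧
        v = -(∑ j, Real.log (∑ i, B i j * μ i)) + ∑ i, μ i * c i - (ρ : ℝ)} :=
  strong_duality_proportional_fairness_general η ρ B hB c hslater hlink
end

section
/- Suppose there exists a strictly feasible point (f with f_j > 0 for all j and ∑_j B i j * f_j < c_i for all i), every path contains at least one link, and f* is the strictly positive feasible maximizer of ∑_{j=1}^ρ log(f_j) over strictly positive feasible vectors. Then there exist Lagrange multipliers μ* : Fin η → ℝ with μ*_i ≥ 0 for all i such that (a) f*_j = 1/(∑_{i=1}^η B i j * μ*_i) for every path j, and (b) complementary slackness holds: μ*_i · (c_i − ∑_{j=1}^ρ B i j * f*_j) = 0 for every link i; in particular μ*_i > 0 only if link i is saturated. -/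
/-!
At the maximizer `f`, moving a little along any direction `d` that does not increase the load of
a saturated link keeps the flow positive and feasible, so the derivative `∑ j, d j / f j` of the
objective in direction `d` is nonpositive. By Farkas' lemma, the gradient `(1 / f j)_j` is then a
nonnegative combination of the rows of `B` belonging to saturated links; its coefficients are
the multipliers, and they vanish on unsaturated links.
-/

open Finset

open Filter Topology

namespace Module.Dual

variable {𝕜 E ι : Type*} [AddCommGroup E]

section Elimination

variable [Field 𝕜] [Module 𝕜 E]

/-- The Fourier–Motzkin step eliminating `w` along a direction `d₀` with `w d₀ ≠ 0`. -/
def eliminate (w : Dual 𝕜 E) (d₀ : E) (x : Dual 𝕜 E) : Dual 𝕜 E :=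
  w d₀ • x - x d₀ • w

theorem eliminate_apply (w : Dual 𝕜 E) (d₀ : E) (x : Dual 𝕜 E) (d : E) :
    eliminate w d₀ x d = x (w d₀ • d - w d • d₀) := by
  simp only [eliminate, LinearMap.sub_apply, LinearMap.smul_apply, map_sub, map_smul, smul_eq_mul]
  ring

theorem eq_smul_add_sum_smul_of_eliminate_eq {w g : Dual 𝕜 E} {d₀ : E} (hw : w d₀ ≠ 0)
    {s : Finset ι} {v : ι → Dual 𝕜 E} {ν : ι → 𝕜}
    (h : eliminate w d₀ g = ∑ i ∈ s, ν i • eliminate w d₀ (v i)) :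
    g = ((g d₀ - ∑ i ∈ s, ν i * v i d₀) / w d₀) • w + ∑ i ∈ s, ν i • v i := by
  have hsum : ∑ i ∈ s, ν i • eliminate w d₀ (v i)
      = w d₀ • ∑ i ∈ s, ν i • v i - (∑ i ∈ s, ν i * v i d₀) • w := by
    simp only [eliminate, smul_sub, sum_sub_distrib, smul_sum, sum_smul, smul_smul, mul_comm]
  rw [hsum, eliminate] at h
  apply smul_right_injective _ hw
  simp only [smul_add, smul_smul, mul_div_cancel₀ _ hw]
  linear_combination (norm := module) h

end Elimination

variable [Field 𝕜] [LinearOrder 𝕜] [IsStrictOrderedRing 𝕜] [Module 𝕜 E]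

theorem eq_zero_of_forall_apply_nonpos {g : Dual 𝕜 E} (h : ∀ d, g d ≤ 0) : g = 0 :=
  LinearMap.ext fun d => le_antisymm (h d) (by simpa using h (-d))

/-- Farkas' lemma. -/
theorem exists_nonneg_eq_sum_smul_of_forall_nonpos (s : Finset ι) (v : ι → Dual 𝕜 E)
    (g : Dual 𝕜 E) (h : ∀ d, (∀ i ∈ s, v i d ≤ 0) → g d ≤ 0) :
    ∃ μ : ι → 𝕜, (∀ i, 0 ≤ μ i) ∧ (∀ i ∉ s, μ i = 0) ∧ g = ∑ i ∈ s, μ i • v i := by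
  classical
  induction s using Finset.cons_induction generalizing v g with
  | empty =>
    exact ⟨0, fun _ => le_rfl, fun _ _ => rfl,
      by simpa using eq_zero_of_forall_apply_nonpos fun d => h d (by simp)⟩
  | cons a s ha ih =>
    by_cases hs : ∀ d, (∀ i ∈ s, v i d ≤ 0) → g d ≤ 0
    · obtain ⟨μ, hμ, hμs, rfl⟩ := ih v g hs
      refine ⟨μ, hμ, fun i hi => hμs i fun his => hi (mem_cons_of_mem his), ?_⟩
      rw [sum_cons, hμs a ha, zero_smul, zero_add]
    push Not at hs
    obtain ⟨d₀, hd₀, hgd₀⟩ := hs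
    have ht : 0 < v a d₀ := by
      by_contra! ht
      exact (h d₀ ((forall_mem_cons ha _).2 ⟨ht, hd₀⟩)).not_gt hgd₀
    -- After eliminating `v a`, the hypothesis holds for the constraints indexed by `s` alone.
    obtain ⟨ν, hν, hνs, hg⟩ := ih (fun i => eliminate (v a) d₀ (v i)) (eliminate (v a) d₀ g)
      fun d hd => by
        rw [eliminate_apply]
        refine h _ ((forall_mem_cons ha _).2 ⟨le_of_eq ?_, fun i hi => ?_⟩)
        · simp only [map_sub, map_smul, smul_eq_mul]
          ring
        · simpa only [eliminate_apply] using hd i hi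
    have hS : ∑ i ∈ s, ν i * v i d₀ ≤ 0 :=
      sum_nonpos fun i hi => mul_nonpos_of_nonneg_of_nonpos (hν i) (hd₀ i hi)
    set m := (g d₀ - ∑ i ∈ s, ν i * v i d₀) / v a d₀
    have hupd : ∀ i ∈ s, Function.update ν a m i = ν i := fun i hi =>
      Function.update_of_ne (by rintro rfl; exact ha hi) _ _
    refine ⟨Function.update ν a m, fun i => ?_, fun i hi => ?_, ?_⟩
    · rcases eq_or_ne i a with rfl | hia
      · simpa using div_nonneg (by linarith) ht.le
      · simpa [hia] using hν i
    · rw [Function.update_of_ne (by rintro rfl; exact hi (mem_cons_self _ _))]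
      exact hνs i fun his => hi (mem_cons_of_mem his)
    · rw [sum_cons, Function.update_self, sum_congr rfl fun i hi => congrArg (· • v i) (hupd i hi)]
      exact eq_smul_add_sum_smul_of_eliminate_eq ht.ne' hg

end Module.Dual

section FirstOrder

variable {E ι : Type*} [NormedAddCommGroup E] [NormedSpace ℝ E]

theorem eventually_nhdsGT_apply_add_smul_le {a : E →L[ℝ] ℝ} {β : ℝ} {x d : E} (hx : a x ≤ β)
    (hd : a x = β → a d ≤ 0) : ∀ᶠ t in 𝓝[>] (0 : ℝ), a (x + t • d) ≤ β := by
  rcases hx.eq_or_lt with hxβ | hxβ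
  · filter_upwards [self_mem_nhdsWithin] with t (ht : 0 < t)
    rw [map_add, map_smul, smul_eq_mul, hxβ]
    linarith [mul_nonpos_of_nonneg_of_nonpos ht.le (hd hxβ)]
  · have hcont : Continuous fun t : ℝ => a (x + t • d) := by fun_prop
    have : ∀ᶠ t in 𝓝 (0 : ℝ), a (x + t • d) < β :=
      hcont.continuousAt.eventually_lt continuousAt_const (by simpa using hxβ)
    exact (this.filter_mono nhdsWithin_le_nhds).mono fun t ht => ht.le

variable [Fintype ι] {A : ι → E →L[ℝ] ℝ} {b : ι → ℝ} {U : Set E} {F : E → ℝ}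
  {F' : E →L[ℝ] ℝ} {x : E}

theorem IsMaxOn.hasFDerivAt_apply_nonpos_of_active
    (hmax : IsMaxOn F (U ∩ {y | ∀ i, A i y ≤ b i}) x) (hU : IsOpen U) (hxU : x ∈ U)
    (hx : ∀ i, A i x ≤ b i) (hF : HasFDerivAt F F' x) {d : E}
    (hd : ∀ i, A i x = b i → A i d ≤ 0) : F' d ≤ 0 := by
  refine hmax.localize.hasFDerivWithinAt_nonpos hF.hasFDerivWithinAt
    (mem_posTangentConeAt_of_frequently_mem (Eventually.frequently ?_))
  have hmemU : ∀ᶠ t in 𝓝 (0 : ℝ), x + t • d ∈ U :=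
    (Continuous.tendsto' (by fun_prop) 0 x (by simp)).eventually (hU.mem_nhds hxU)
  filter_upwards [hmemU.filter_mono nhdsWithin_le_nhds, eventually_all.2 fun i =>
    eventually_nhdsGT_apply_add_smul_le (hx i) (hd i)] with t htU htA
  exact ⟨htU, htA⟩

theorem IsMaxOn.exists_kkt_multipliers (hmax : IsMaxOn F (U ∩ {y | ∀ i, A i y ≤ b i}) x)
    (hU : IsOpen U) (hxU : x ∈ U) (hx : ∀ i, A i x ≤ b i) (hF : HasFDerivAt F F' x) :
    ∃ μ : ι → ℝ, (∀ i, 0 ≤ μ i) ∧ (∀ i, A i x < b i → μ i = 0) ∧ F' = ∑ i, μ i • A i := by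
  classical
  obtain ⟨μ, hμ, hμs, hF'⟩ := Module.Dual.exists_nonneg_eq_sum_smul_of_forall_nonpos
    {i | A i x = b i} (fun i => (A i : E →ₗ[ℝ] ℝ)) F' fun d hd =>
      hmax.hasFDerivAt_apply_nonpos_of_active hU hxU hx hF fun i hi => hd i (by simpa using hi)
  refine ⟨μ, hμ, fun i hi => hμs i (by simpa using hi.ne), ?_⟩
  ext1 d
  have hd := LinearMap.congr_fun hF' d
  rw [← sum_subset (subset_univ _) fun i _ hi => by rw [hμs i hi, zero_smul]]
  simpa using hd

end FirstOrder

theorem hasFDerivAt_sum_log_s8 {ι : Type*} [Fintype ι] {f : ι → ℝ} (hf : ∀ j, 0 < f j) :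
    HasFDerivAt (fun g : ι → ℝ => ∑ j, Real.log (g j))
      (∑ j, (f j)⁻¹ • ContinuousLinearMap.proj (R := ℝ) (φ := fun _ : ι => ℝ) j) f :=
  HasFDerivAt.fun_sum fun j _ => (hasFDerivAt_apply j f).log (hf j).ne'

theorem kkt_multipliers_for_log_utility_maximizer_general
    (η ρ : ℕ)
    (B : Fin η → Fin ρ → ℝ)
    (c : Fin η → ℝ)
    (f : Fin ρ → ℝ) (hfpos : ∀ j, 0 < f j) (hffeas : Feasible B c f)
    (hmax : ∀ g : Fin ρ → ℝ, (∀ j, 0 < g j) → Feasible B c g →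
      ∑ j, Real.log (g j) ≤ ∑ j, Real.log (f j)) :
    ∃ μ : Fin η → ℝ, (∀ i, 0 ≤ μ i) ∧
      (∀ j, f j = (1 : ℝ) / ∑ i, B i j * μ i) ∧
      (∀ i, μ i * (c i - ∑ j, B i j * f j) = 0) ∧
      (∀ i, 0 < μ i → ∑ j, B i j * f j = c i) := by
  set A : Fin η → (Fin ρ → ℝ) →L[ℝ] ℝ := fun i => ∑ j, B i j • ContinuousLinearMap.proj j
  have hA : ∀ i y, A i y = ∑ j, B i j * y j := fun i y => by simp [A]
  have hU : IsOpen {g : Fin ρ → ℝ | ∀ j, 0 < g j} := by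
    simpa only [Set.ofPred_forall] using
      isOpen_iInter_of_finite fun j => isOpen_lt continuous_const (continuous_apply j)
  have hmaxOn : IsMaxOn (fun g : Fin ρ → ℝ => ∑ j, Real.log (g j))
      ({g | ∀ j, 0 < g j} ∩ {y | ∀ i, A i y ≤ c i}) f := fun g ⟨hg, hgc⟩ =>
    hmax g hg ⟨fun j => (hg j).le, fun i => hA i g ▸ hgc i⟩
  obtain ⟨μ, hμ, hslack, hgrad⟩ := hmaxOn.exists_kkt_multipliers hU hfpos
    (fun i => (hA i f).symm ▸ hffeas.2 i) (hasFDerivAt_sum_log_s8 hfpos)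
  have hinv : ∀ j, (f j)⁻¹ = ∑ i, B i j * μ i := fun j => by
    simpa [hA, Pi.single_apply, mul_comm] using congrArg (fun φ => φ (Pi.single j 1)) hgrad
  have hactive : ∀ i, μ i ≠ 0 → ∑ j, B i j * f j = c i := fun i hi =>
    ((hffeas.2 i).lt_or_eq).resolve_left fun hlt => hi (hslack i ((hA i f).symm ▸ hlt))
  refine ⟨μ, hμ, fun j => by rw [← hinv, one_div, inv_inv], fun i => ?_,
    fun i hi => hactive i hi.ne'⟩
  rcases eq_or_ne (μ i) 0 with h | h
  · rw [h, zero_mul]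
  · rw [hactive i h, sub_self, mul_zero]

/-- Under a Slater condition, for the strictly positive feasible maximizer of
the log-utility there exist nonnegative Lagrange multipliers `μ*` such that
`f* j = 1 / (∑ i, B i j * μ* i)` and complementary slackness holds; in
particular `μ* i > 0` only if link `i` is saturated. -/
theorem kkt_multipliers_for_log_utility_maximizer
    (η ρ : ℕ) (hη : 0 < η) (hρ : 0 < ρ)
    (B : Fin η → Fin ρ → ℝ) (hB : ∀ i j, B i j = 0 ∨ B i j = 1)
    (c : Fin η → ℝ) (hc : ∀ i, 0 < c i)
    (hslater : ∃ f : Fin ρ → ℝ, (∀ j, 0 < f j) ∧ ∀ i, ∑ j, B i j * f j < c i)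
    (hlink : ∀ j, ∃ i, B i j = 1)
    (f : Fin ρ → ℝ) (hfpos : ∀ j, 0 < f j) (hffeas : Feasible B c f)
    (hmax : ∀ g : Fin ρ → ℝ, (∀ j, 0 < g j) → Feasible B c g →
      ∑ j, Real.log (g j) ≤ ∑ j, Real.log (f j)) :
    ∃ μ : Fin η → ℝ, (∀ i, 0 ≤ μ i) ∧
      (∀ j, f j = (1 : ℝ) / ∑ i, B i j * μ i) ∧
      (∀ i, μ i * (c i - ∑ j, B i j * f j) = 0) ∧
      (∀ i, 0 < μ i → ∑ j, B i j * f j = c i) :=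
  kkt_multipliers_for_log_utility_maximizer_general η ρ B c f hfpos hffeas hmax
end

section
/- Let f : ℝ → (Fin ρ → ℝ) be differentiable with f_j(t) > 0 for all j and t, and suppose f satisfies the primal congestion-control dynamics: for every j, d/dt f_j(t) = 1 − f_j(t) · ∑_{i=1}^η B i j * p_i(y_i(t)), where y_i(t) = ∑_{j=1}^ρ B i j * f_j(t) and p_i(y) = max(0, y − c_i + ε)/ε² for a fixed ε > 0. Define the Lyapunov function Û(t) = ∑_{j=1}^ρ log(f_j(t)) − ∑_{i=1}^η ∫_0^{y_i(t)} p_i(z) dz. Then Û is differentiable with d/dt Û(t) = ∑_{j=1}^ρ (d/dt f_j(t))² / f_j(t) ≥ 0; in particular Û is nondecreasing along trajectories of the primal algorithm. -/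
open Finset MeasureTheory

/-!
Along a trajectory, `d/dt ∑ⱼ log fⱼ = ∑ⱼ fⱼ'/fⱼ`, while by the fundamental theorem of calculus
`d/dt ∑ᵢ ∫₀^{yᵢ} pᵢ = ∑ᵢ pᵢ(yᵢ) yᵢ' = ∑ⱼ qⱼ fⱼ'`, where `qⱼ = ∑ᵢ Bᵢⱼ pᵢ(yᵢ)` is the price of
path `j`. The dynamics say `qⱼ fⱼ = 1 - fⱼ'`, so each summand `fⱼ'/fⱼ - qⱼ fⱼ'` of `Û'` equals
`fⱼ'²/fⱼ ≥ 0`.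
-/

noncomputable def primalLyapunov {ι κ : Type*} [Fintype ι] [Fintype κ]
    (B : ι → κ → ℝ) (p : ι → ℝ → ℝ) (x : κ → ℝ) : ℝ :=
  ∑ j, Real.log (x j) - ∑ i, ∫ z in (0 : ℝ)..(∑ k, B i k * x k), p i z

theorem Continuous.hasDerivAt_integral_comp {p y : ℝ → ℝ} {y' t : ℝ} (a : ℝ)
    (hp : Continuous p) (hy : HasDerivAt y y' t) :
    HasDerivAt (fun s => ∫ z in a..y s, p z) (p (y t) * y') t :=
  (hp.integral_hasStrictDerivAt a (y t)).hasDerivAt.comp t hy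

section

variable {ι κ : Type*} [Fintype ι] [Fintype κ]

theorem sum_div_sub_sum_mul_sum_eq_sum_sq_div (B : ι → κ → ℝ) (P : ι → ℝ) {x v : κ → ℝ}
    (hx : ∀ j, x j ≠ 0) (hv : ∀ j, v j = 1 - x j * ∑ i, B i j * P i) :
    ∑ j, v j / x j - ∑ i, P i * ∑ k, B i k * v k = ∑ j, v j ^ 2 / x j := by
  have hswap : ∑ i, P i * ∑ k, B i k * v k = ∑ k, (∑ i, B i k * P i) * v k := by
    simp only [mul_sum, sum_mul]
    rw [sum_comm]
    exact sum_congr rfl fun _ _ => sum_congr rfl fun _ _ => by ring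
  rw [hswap, ← sum_sub_distrib]
  refine sum_congr rfl fun j _ => ?_
  have hprice : ∑ i, B i j * P i = (1 - v j) / x j := by
    rw [eq_div_iff (hx j)]
    linear_combination hv j
  rw [hprice]
  field_simp
  ring

theorem hasDerivAt_primalLyapunov (B : ι → κ → ℝ) {p : ι → ℝ → ℝ} (hp : ∀ i, Continuous (p i))
    {f : ℝ → κ → ℝ} {v : κ → ℝ} {t : ℝ} (hf : ∀ j, HasDerivAt (fun s => f s j) (v j) t)
    (hpos : ∀ j, 0 < f t j)
    (hv : ∀ j, v j = 1 - f t j * ∑ i, B i j * p i (∑ k, B i k * f t k)) :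
    HasDerivAt (fun s => primalLyapunov B p (f s)) (∑ j, v j ^ 2 / f t j) t := by
  have hlog : HasDerivAt (fun s => ∑ j, Real.log (f s j)) (∑ j, v j / f t j) t :=
    HasDerivAt.fun_sum fun j _ => (hf j).log (hpos j).ne'
  have hload : ∀ i, HasDerivAt (fun s => ∑ k, B i k * f s k) (∑ k, B i k * v k) t :=
    fun i => HasDerivAt.fun_sum fun k _ => (hf k).const_mul (B i k)
  have hcost := HasDerivAt.fun_sum fun i (_ : i ∈ univ) =>
    (hp i).hasDerivAt_integral_comp 0 (hload i)
  rw [← sum_div_sub_sum_mul_sum_eq_sum_sq_div B _ (fun j => (hpos j).ne') hv]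
  exact hlog.fun_sub hcost

end

theorem primal_dynamics_lyapunov_nondecreasing_general
    (η ρ : ℕ)
    (B : Fin η → Fin ρ → ℝ)
    (c : Fin η → ℝ)
    (ε : ℝ)
    (f : ℝ → Fin ρ → ℝ)
    (hdiff : ∀ j, Differentiable ℝ (fun t => f t j))
    (hpos : ∀ t j, 0 < f t j)
    (hode : ∀ j t, deriv (fun s => f s j) t =
      1 - f t j * ∑ i, B i j *
        (max 0 ((∑ k, B i k * f t k) - c i + ε) / ε ^ 2)) :
    (∀ t, HasDerivAt
        (fun t => ∑ j, Real.log (f t j) -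
          ∑ i, ∫ z in (0 : ℝ)..(∑ k, B i k * f t k),
            max 0 (z - c i + ε) / ε ^ 2)
        (∑ j, (deriv (fun s => f s j) t) ^ 2 / f t j) t) ∧
    (∀ t, 0 ≤ ∑ j, (deriv (fun s => f s j) t) ^ 2 / f t j) ∧
    Monotone (fun t => ∑ j, Real.log (f t j) -
      ∑ i, ∫ z in (0 : ℝ)..(∑ k, B i k * f t k),
        max 0 (z - c i + ε) / ε ^ 2) := by
  have hderiv : ∀ t, HasDerivAt
      (fun s => primalLyapunov B (fun i z => max 0 (z - c i + ε) / ε ^ 2) (f s))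
      (∑ j, (deriv (fun s => f s j) t) ^ 2 / f t j) t := fun t =>
    hasDerivAt_primalLyapunov B (fun i => by fun_prop) (fun j => (hdiff j t).hasDerivAt)
      (hpos t) (fun j => hode j t)
  have hnonneg : ∀ t, 0 ≤ ∑ j, (deriv (fun s => f s j) t) ^ 2 / f t j :=
    fun t => sum_nonneg fun j _ => div_nonneg (sq_nonneg _) (hpos t j).le
  exact ⟨hderiv, hnonneg, monotone_of_hasDerivAt_nonneg hderiv hnonneg⟩

/-- Along trajectories of the primal congestion-control dynamics, the Lyapunov
function `Û(t) = ∑ j, log (f j t) - ∑ i, ∫_0^{y i t} p i` is differentiable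
with derivative `∑ j, (f j)'(t)² / f j t ≥ 0`; in particular `Û` is
nondecreasing. -/
theorem primal_dynamics_lyapunov_nondecreasing
    (η ρ : ℕ) (hη : 0 < η) (hρ : 0 < ρ)
    (B : Fin η → Fin ρ → ℝ) (hB : ∀ i j, B i j = 0 ∨ B i j = 1)
    (c : Fin η → ℝ) (hc : ∀ i, 0 < c i)
    (ε : ℝ) (hε : 0 < ε)
    (f : ℝ → Fin ρ → ℝ)
    (hdiff : ∀ j, Differentiable ℝ (fun t => f t j))
    (hpos : ∀ t j, 0 < f t j)
    (hode : ∀ j t, deriv (fun s => f s j) t =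
      1 - f t j * ∑ i, B i j *
        (max 0 ((∑ k, B i k * f t k) - c i + ε) / ε ^ 2)) :
    (∀ t, HasDerivAt
        (fun t => ∑ j, Real.log (f t j) -
          ∑ i, ∫ z in (0 : ℝ)..(∑ k, B i k * f t k),
            max 0 (z - c i + ε) / ε ^ 2)
        (∑ j, (deriv (fun s => f s j) t) ^ 2 / f t j) t) ∧
    (∀ t, 0 ≤ ∑ j, (deriv (fun s => f s j) t) ^ 2 / f t j) ∧
    Monotone (fun t => ∑ j, Real.log (f t j) -
      ∑ i, ∫ z in (0 : ℝ)..(∑ k, B i k * f t k),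
        max 0 (z - c i + ε) / ε ^ 2) :=
  primal_dynamics_lyapunov_nondecreasing_general η ρ B c ε f hdiff hpos hode
end
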